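/- Let F be a field, n(y), d(y) ∈ F[y] nonzero coprime with G = max(deg n, deg d) = N = deg n > deg d = D. Let p ∈ F[x] be nonzero of grade g and q(y) = Σ_i p_i n(y)^i d(y)^{g-i}. Then deg q = g·G if and only if g = deg p. -/

import Mathlib

/-! The summand `pᵢ nⁱ d^(g-i)` has degree `g·D + i·(N - D)`, which is strictly increasing in `i`
because `D < N`. So the nonzero summands have pairwise distinct degrees, the degree of `q` is
attained by the summand with `i = deg p`, and `deg q = g·D + (deg p)·(N - D)`. This equals
`g·N = g·D + g·(N - D)` exactly when `deg p = g`. -/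

open Polynomial Finset

theorem mul_add_tsub_mul_eq {N D i g : ℕ} (hDN : D ≤ N) (hig : i ≤ g) :
    i * N + (g - i) * D = g * D + i * (N - D) := by
  obtain ⟨a, rfl⟩ := Nat.exists_eq_add_of_le hDN
  obtain ⟨b, rfl⟩ := Nat.exists_eq_add_of_le hig
  simp only [Nat.add_sub_cancel_left]
  ring

namespace Polynomial

variable {R : Type*} [CommRing R] [IsDomain R] {n d : R[X]}

theorem natDegree_C_mul_pow_mul_pow {c : R} (hc : c ≠ 0) (hn : n ≠ 0) (hd : d ≠ 0) (i j : ℕ) :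
    (C c * n ^ i * d ^ j).natDegree = i * n.natDegree + j * d.natDegree := by
  rw [mul_assoc, natDegree_C_mul hc, natDegree_mul (pow_ne_zero _ hn) (pow_ne_zero _ hd),
    natDegree_pow, natDegree_pow]

theorem natDegree_sum_coeff_mul_pow_mul_pow (hn : n ≠ 0) (hd : d ≠ 0)
    (hdeg : d.natDegree < n.natDegree) {p : R[X]} (hp : p ≠ 0) {g : ℕ} (hg : p.natDegree ≤ g) :
    (∑ i ∈ range (g + 1), C (p.coeff i) * n ^ i * d ^ (g - i)).natDegree =
      g * d.natDegree + p.natDegree * (n.natDegree - d.natDegree) := by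
  set f : ℕ → R[X] := fun i => C (p.coeff i) * n ^ i * d ^ (g - i)
  have hf : ∀ i ∈ range (g + 1), f i ≠ 0 →
      p.coeff i ≠ 0 ∧ (f i).natDegree = g * d.natDegree + i * (n.natDegree - d.natDegree) := by
    intro i hi hfi
    have hc : p.coeff i ≠ 0 := fun h ↦ hfi (by simp [f, h])
    refine ⟨hc, ?_⟩
    rw [natDegree_C_mul_pow_mul_pow hc hn hd,
      mul_add_tsub_mul_eq hdeg.le (Nat.lt_succ_iff.mp (mem_range.mp hi))]
  have hpos : 0 < n.natDegree - d.natDegree := Nat.sub_pos_of_lt hdeg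
  have hk : p.natDegree ∈ range (g + 1) := mem_range.mpr (Nat.lt_succ_of_le hg)
  have hfk : f p.natDegree ≠ 0 := by
    simp only [f, ne_eq, mul_eq_zero, C_eq_zero, coeff_natDegree, leadingCoeff_eq_zero,
      pow_eq_zero_iff', not_or, not_and, Decidable.not_not]
    exact ⟨⟨hp, fun h ↦ absurd h hn⟩, fun h ↦ absurd h hd⟩
  rw [natDegree_sum_eq_of_disjoint f _ ?pairwise]
  case pairwise =>
    rintro i ⟨hi, hfi⟩ j ⟨hj, hfj⟩ hij
    simp only [Function.onFun, Function.comp_apply, (hf i hi hfi).2, (hf j hj hfj).2, ne_eq,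
      Nat.add_left_cancel_iff, Nat.mul_left_inj hpos.ne']
    exact hij
  refine le_antisymm (Finset.sup_le fun i hi ↦ ?_) ?_
  · by_cases hfi : f i = 0
    · simp [hfi]
    obtain ⟨hc, hfi⟩ := hf i hi hfi
    rw [hfi]
    gcongr
    exact le_natDegree_of_ne_zero hc
  · rw [← (hf _ hk hfk).2]
    exact le_sup (f := fun i ↦ (f i).natDegree) hk

end Polynomial

theorem stmt_2_general {F : Type*} [Field F] (n d : F[X]) (hn : n ≠ 0) (hd : d ≠ 0)
    (N D G : ℕ) (hN : N = n.natDegree) (hD : D = d.natDegree)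
    (hND : D < N) (hG : G = N) (p : F[X]) (hp : p ≠ 0) (g : ℕ) (hg : p.natDegree ≤ g)
    (q : F[X]) (hq : q = ∑ i ∈ range (g + 1), C (p.coeff i) * n ^ i * d ^ (g - i)) :
    q.natDegree = g * G ↔ g = p.natDegree := by
  subst hN hD hG hq
  have hgN : g * n.natDegree = g * d.natDegree + g * (n.natDegree - d.natDegree) := by
    simpa using mul_add_tsub_mul_eq hND.le (le_refl g)
  rw [natDegree_sum_coeff_mul_pow_mul_pow hn hd hND hp hg, hgN, Nat.add_left_cancel_iff,
    Nat.mul_left_inj (Nat.sub_pos_of_lt hND).ne', eq_comm]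

theorem stmt_2 {F : Type*} [Field F] (n d : F[X]) (hn : n ≠ 0) (hd : d ≠ 0)
    (hcop : IsCoprime n d) (N D G : ℕ) (hN : N = n.natDegree) (hD : D = d.natDegree)
    (hND : D < N) (hG : G = N) (p : F[X]) (hp : p ≠ 0) (g : ℕ) (hg : p.natDegree ≤ g)
    (q : F[X]) (hq : q = ∑ i ∈ range (g + 1), C (p.coeff i) * n ^ i * d ^ (g - i)) :
    q.natDegree = g * G ↔ g = p.natDegree :=
  stmt_2_general n d hn hd N D G hN hD hND hG p hp g hg q hq
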